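/- Let f : ℝ → ℝ be continuously differentiable with f(x+1) = f(x) for all x, and suppose every zero of f is hyperbolic, i.e. f(z) = 0 implies f'(z) ≠ 0. Then the set {x ∈ [0, 1) : f(x) = 0} is finite and has even cardinality. (Theorem 4.3, first part: the number of hyperbolic pseudo equilibria of the sliding vector field on the torus or sphere is even.) -/

import Mathlib

/-!
Zeros with nonzero derivative are isolated, so there are finitely many in a period. Just to
the right of a simple zero `z` the sign of `f` is the sign of `f' z`, and just to its left it
is the opposite; since `f` has constant sign between consecutive zeros, the signs of `f'` at
consecutive zeros alternate. Going once around the circle, from the first zero `a ∈ [0, 1)` to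
`a + 1`, returns to the same sign of `f'`, which forces an even number of sign flips.
-/

open Set Filter Topology

theorem IsCompact.finite_sep_eq_of_eventually_ne {X Y : Type*} [TopologicalSpace X]
    [TopologicalSpace Y] [T1Space Y] {K : Set X} (hK : IsCompact K) {f : X → Y}
    (hf : Continuous f) {y : Y} (hiso : ∀ z, f z = y → ∀ᶠ x in 𝓝[≠] z, f x ≠ y) :
    {x ∈ K | f x = y}.Finite := by
  refine (hK.inter_right (isClosed_singleton.preimage hf)).finite ?_
  rw [isDiscrete_iff_nhdsNE]
  rintro z ⟨-, hz⟩
  rw [inf_principal_eq_bot]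
  filter_upwards [hiso z hz] with x hx hxK using hx hxK.2

theorem IsPreconnected.sign_eq_sign {α β : Type*} [TopologicalSpace α] [Zero β] [LinearOrder β]
    [TopologicalSpace β] [OrderTopology β] {s : Set α} (hs : IsPreconnected s) {f : α → β}
    (hf : ContinuousOn f s) (hne : ∀ x ∈ s, f x ≠ 0) {x y : α} (hx : x ∈ s) (hy : y ∈ s) :
    SignType.sign (f x) = SignType.sign (f y) :=
  hs.constant (f := SignType.sign ∘ f)
    (fun z hz => (continuousAt_sign_of_ne_zero (hne z hz)).comp_continuousWithinAt (hf z hz))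
    hx hy

section SignNearZero

variable {f : ℝ → ℝ} {d a : ℝ}

theorem HasDerivAt.eventually_sign_slope (h : HasDerivAt f d a) (hd : d ≠ 0) :
    ∀ᶠ x in 𝓝[≠] a, SignType.sign (slope f a x) = SignType.sign d := by
  have := (continuousAt_sign_of_ne_zero hd).tendsto.comp h.tendsto_slope
  rw [nhds_discrete, tendsto_pure] at this
  exact this

theorem HasDerivAt.eventually_sign_right (h : HasDerivAt f d a) (ha : f a = 0) (hd : d ≠ 0) :
    ∀ᶠ x in 𝓝[>] a, SignType.sign (f x) = SignType.sign d := by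
  filter_upwards [(h.eventually_sign_slope hd).filter_mono (nhdsGT_le_nhdsNE a),
    self_mem_nhdsWithin] with x hx (hax : a < x)
  rwa [slope_def_field, ha, sub_zero, div_eq_inv_mul, sign_mul,
    sign_pos (inv_pos.2 (sub_pos.2 hax)), one_mul] at hx

theorem HasDerivAt.eventually_sign_left (h : HasDerivAt f d a) (ha : f a = 0) (hd : d ≠ 0) :
    ∀ᶠ x in 𝓝[<] a, SignType.sign (f x) = -SignType.sign d := by
  filter_upwards [(h.eventually_sign_slope hd).filter_mono (nhdsLT_le_nhdsNE a),
    self_mem_nhdsWithin] with x hx (hxa : x < a)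
  rwa [slope_def_field, ha, sub_zero, div_eq_inv_mul, sign_mul,
    sign_neg (inv_lt_zero.2 (sub_neg.2 hxa)), neg_one_mul, neg_eq_iff_eq_neg] at hx

end SignNearZero

theorem sign_deriv_eq_neg_of_consecutive_zeros {f : ℝ → ℝ} {a b da db : ℝ} (hab : a < b)
    (hfc : ContinuousOn f (Ioo a b)) (ha : HasDerivAt f da a) (hb : HasDerivAt f db b)
    (hfa : f a = 0) (hfb : f b = 0) (hda : da ≠ 0) (hdb : db ≠ 0)
    (hgap : ∀ x ∈ Ioo a b, f x ≠ 0) : SignType.sign db = -SignType.sign da := by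
  obtain ⟨x, hxa, hx⟩ := ((ha.eventually_sign_right hfa hda).and (Ioo_mem_nhdsGT hab)).exists
  obtain ⟨y, hyb, hy⟩ := ((hb.eventually_sign_left hfb hdb).and (Ioo_mem_nhdsLT hab)).exists
  rw [← hxa, isPreconnected_Ioo.sign_eq_sign hfc hgap hx hy, hyb, neg_neg]

section HyperbolicZeros

variable {f : ℝ → ℝ}

theorem finite_sep_zero_of_deriv_ne_zero (hf : Differentiable ℝ f)
    (hhyp : ∀ z, f z = 0 → deriv f z ≠ 0) {K : Set ℝ} (hK : IsCompact K) :
    {x ∈ K | f x = 0}.Finite :=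
  hK.finite_sep_eq_of_eventually_ne hf.continuous fun z hz =>
    (hf z).hasDerivAt.eventually_ne (hhyp z hz)

theorem finite_sep_Ico_zero_of_deriv_ne_zero (hf : Differentiable ℝ f)
    (hhyp : ∀ z, f z = 0 → deriv f z ≠ 0) (a b : ℝ) : {x ∈ Ico a b | f x = 0}.Finite :=
  (finite_sep_zero_of_deriv_ne_zero hf hhyp isCompact_Icc).subset
    fun _ hx => ⟨Ico_subset_Icc_self hx.1, hx.2⟩

theorem sign_deriv_eq_neg_one_pow_ncard (hf : Differentiable ℝ f)
    (hhyp : ∀ z, f z = 0 → deriv f z ≠ 0) {a b : ℝ} (hab : a ≤ b) (ha : f a = 0) (hb : f b = 0) :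
    SignType.sign (deriv f b) =
      (-1) ^ {x ∈ Ico a b | f x = 0}.ncard * SignType.sign (deriv f a) := by
  induction hn : {x ∈ Ico a b | f x = 0}.ncard using Nat.strong_induction_on generalizing b with
  | _ n ih =>
  rcases hab.eq_or_lt with rfl | hab
  · simp [← hn]
  obtain ⟨c, ⟨hc, hfc⟩, hcmax⟩ := exists_max_image {x ∈ Ico a b | f x = 0} id
    (finite_sep_Ico_zero_of_deriv_ne_zero hf hhyp a b) ⟨a, left_mem_Ico.2 hab, ha⟩
  have hsplit : {x ∈ Ico a b | f x = 0} = insert c {x ∈ Ico a c | f x = 0} := by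
    ext x
    constructor
    · rintro ⟨hx, hfx⟩
      rcases (hcmax x ⟨hx, hfx⟩).lt_or_eq with hxc | rfl
      · exact Or.inr ⟨⟨hx.1, hxc⟩, hfx⟩
      · exact Or.inl rfl
    · rintro (rfl | ⟨hx, hfx⟩)
      · exact ⟨hc, hfc⟩
      · exact ⟨⟨hx.1, hx.2.trans hc.2⟩, hfx⟩
  have hcard : n = {x ∈ Ico a c | f x = 0}.ncard + 1 := by
    rw [← hn, hsplit, ncard_insert_of_notMem (fun h => h.1.2.false)
      (finite_sep_Ico_zero_of_deriv_ne_zero hf hhyp a c)]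
  have hgap : ∀ x ∈ Ioo c b, f x ≠ 0 := fun x hx hfx =>
    (hcmax x ⟨⟨hc.1.trans hx.1.le, hx.2⟩, hfx⟩).not_gt hx.1
  rw [sign_deriv_eq_neg_of_consecutive_zeros hc.2 hf.continuous.continuousOn (hf c).hasDerivAt
    (hf b).hasDerivAt hfc hb (hhyp c hfc) (hhyp b hb) hgap, ih _ (by omega) hc.1 hfc rfl, hcard,
    pow_succ, mul_neg_one, neg_mul]

end HyperbolicZeros

theorem Function.Periodic.deriv {f : ℝ → ℝ} {p : ℝ} (hf : Function.Periodic f p) :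
    Function.Periodic (deriv f) p := fun x => by
  rw [← deriv_comp_add_const, hf.funext]

theorem Function.Periodic.sep_Ico_eq_sep_Ico_add {f : ℝ → ℝ} {p a : ℝ}
    (hf : Function.Periodic f p) (ha : a ∈ Ico 0 p)
    (hmin : ∀ x ∈ {x ∈ Ico 0 p | f x = 0}, a ≤ x) :
    {x ∈ Ico 0 p | f x = 0} = {x ∈ Ico a (a + p) | f x = 0} := by
  ext x
  constructor
  · intro hx
    exact ⟨⟨hmin x hx, hx.1.2.trans_le (le_add_of_nonneg_left ha.1)⟩, hx.2⟩
  · rintro ⟨⟨hax, hxap⟩, hfx⟩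
    refine ⟨⟨ha.1.trans hax, not_le.1 fun hpx => ?_⟩, hfx⟩
    have := hmin (x - p) ⟨⟨sub_nonneg.2 hpx, by linarith [ha.2]⟩, by rwa [hf.sub_eq]⟩
    linarith

/-- Theorem 4.3, first part: if all zeros of the `1`-periodic `C¹` sliding
vector field `f` are hyperbolic, then the number of pseudo equilibria in one
period is finite and even. -/
theorem pseudo_equilibria_even (f : ℝ → ℝ)
    (hf : ContDiff ℝ 1 f)
    (hper : ∀ x : ℝ, f (x + 1) = f x)
    (hhyp : ∀ z : ℝ, f z = 0 → deriv f z ≠ 0) :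
    ({x ∈ Set.Ico (0 : ℝ) 1 | f x = 0}).Finite ∧
      Even ({x ∈ Set.Ico (0 : ℝ) 1 | f x = 0}).ncard := by
  have hdiff : Differentiable ℝ f := hf.differentiable one_ne_zero
  have hfin := finite_sep_Ico_zero_of_deriv_ne_zero hdiff hhyp 0 1
  refine ⟨hfin, ?_⟩
  rcases eq_empty_or_nonempty {x ∈ Ico (0 : ℝ) 1 | f x = 0} with hempty | hne
  · rw [hempty, ncard_empty]
    exact Even.zero
  obtain ⟨a, ⟨ha, hfa⟩, hmin⟩ := exists_min_image _ id hfin hne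
  have hsign := sign_deriv_eq_neg_one_pow_ncard hdiff hhyp (le_add_of_nonneg_right zero_le_one)
    hfa ((hper a).trans hfa)
  rw [← Function.Periodic.sep_Ico_eq_sep_Ico_add hper ha hmin, Function.Periodic.deriv hper,
    eq_comm, mul_eq_right₀ (sign_ne_zero.2 (hhyp a hfa))] at hsign
  exact (neg_one_pow_eq_one_iff_even (by decide)).1 hsign
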